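/- Every GCGWE with exactly two resources on an undirected graph (symmetric S) has the finite improvement property: no state can be revisited during a sequence of better response updates, and every sufficiently long sequence of better response updates terminates at a pure Nash equilibrium. -/
import Mathlib


open Finset

/-- Congestion level of player `n` in state `Z`. -/
def cong {N : ℕ} (S : Fin N → Fin N → ℝ) (Z : Fin N → Fin 2) (n : Fin N) : ℝ :=
  ∑ m ∈ univ.filter (fun m => Z m = Z n), S m n

/-- A better response update: one player changes its resource and strictly
increases its payoff. -/
def BetterResponse {N : ℕ} (S : Fin N → Fin N → ℝ)
    (f : Fin N → Fin 2 → ℝ → ℝ) (X Y : Fin N → Fin 2) : Prop :=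
  ∃ n r, r ≠ X n ∧ Y = Function.update X n r ∧
    f n r (cong S Y n) > f n (X n) (cong S X n)

/-- `cong` as a full sum with an `if`. -/
lemma cong_eq_sum_ite {N : ℕ} (S : Fin N → Fin N → ℝ) (Z : Fin N → Fin 2) (n : Fin N) :
    cong S Z n = ∑ m, if Z m = Z n then S m n else 0 := by
  rw [cong, Finset.sum_filter]

/-- The potential function. -/
noncomputable def pot {N : ℕ} (S : Fin N → Fin N → ℝ) (s : Fin N → ℝ)
    (X : Fin N → Fin 2) : ℝ :=
  (∑ m, cong S X m) - ∑ m, (if X m = 1 then 2 * ((∑ m', S m' m) - 2 * s m) else 0)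

lemma cong_nonneg {N : ℕ} (S : Fin N → Fin N → ℝ) (hSnonneg : ∀ m n, 0 ≤ S m n)
    (Z : Fin N → Fin 2) (n : Fin N) : 0 ≤ cong S Z n :=
  Finset.sum_nonneg fun m _ => hSnonneg m n

lemma cong_le {N : ℕ} (S : Fin N → Fin N → ℝ) (hSnonneg : ∀ m n, 0 ≤ S m n)
    (Z : Fin N → Fin 2) (n : Fin N) : cong S Z n ≤ ∑ m, S m n :=
  Finset.sum_le_sum_of_subset_of_nonneg (Finset.filter_subset _ _)
    (fun m _ _ => hSnonneg m n)

/-- After a switch, the updating player's congestion is the complement. -/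
lemma cong_update_self {N : ℕ} (S : Fin N → Fin N → ℝ) (hSdiag : ∀ n, S n n = 0)
    (X : Fin N → Fin 2) (n : Fin N) (r : Fin 2) (hr : r ≠ X n) :
    cong S (Function.update X n r) n = (∑ m, S m n) - cong S X n := by
  classical
  set Y := Function.update X n r with hY
  have hYn : Y n = r := Function.update_self n r X
  have h1 : cong S Y n = ∑ m, if X m = r then S m n else 0 := by
    rw [cong_eq_sum_ite, hYn]
    apply Finset.sum_congr rfl
    intro m _
    by_cases hm : m = n
    · subst hm
      simp [hYn, hSdiag m]
    · rw [hY, Function.update_of_ne hm]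
  have h2 : cong S X n = ∑ m, if X m = X n then S m n else 0 := cong_eq_sum_ite S X n
  have hpart : (∑ m, if X m = r then S m n else 0)
      + (∑ m, if X m = X n then S m n else 0) = ∑ m, S m n := by
    rw [← Finset.sum_add_distrib]
    apply Finset.sum_congr rfl
    intro m _
    have hiff : (X m = r ↔ ¬ X m = X n) :=
      (by decide : ∀ v r w : Fin 2, r ≠ w → (v = r ↔ ¬ v = w)) (X m) r (X n) hr
    by_cases h : X m = X n
    · rw [if_neg (fun hh => (hiff.mp hh) h), if_pos h, zero_add]
    · rw [if_pos (hiff.mpr h), if_neg h, add_zero]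
  linarith [h1, h2]

/-- Change of the quadratic part of the potential. -/
lemma sum_cong_update {N : ℕ} (S : Fin N → Fin N → ℝ)
    (hSdiag : ∀ n, S n n = 0) (hSsymm : ∀ m n, S m n = S n m)
    (X : Fin N → Fin 2) (n : Fin N) (r : Fin 2) (hr : r ≠ X n) :
    (∑ m, cong S (Function.update X n r) m) - ∑ m, cong S X m
      = 2 * (cong S (Function.update X n r) n - cong S X n) := by
  classical
  set Y := Function.update X n r with hY
  have hYn : Y n = r := Function.update_self n r X
  -- difference at each non-updating player
  have hdiff : ∀ m, m ≠ n →
      cong S Y m - cong S X m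
        = (if X m = r then S n m else 0) - (if X m = X n then S n m else 0) := by
    intro m hm
    have hYm : Y m = X m := Function.update_of_ne hm r X
    rw [cong_eq_sum_ite, cong_eq_sum_ite, hYm]
    rw [← Finset.sum_erase_add _ _ (Finset.mem_univ n),
        ← Finset.sum_erase_add _ _ (Finset.mem_univ n)]
    have heq : ∑ m' ∈ univ.erase n, (if Y m' = X m then S m' m else 0)
        = ∑ m' ∈ univ.erase n, (if X m' = X m then S m' m else 0) := by
      apply Finset.sum_congr rfl
      intro m' hm'
      rw [hY, Function.update_of_ne (Finset.ne_of_mem_erase hm')]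
    rw [heq, hYn]
    have : (if r = X m then S n m else 0) = (if X m = r then S n m else 0) := by
      simp [eq_comm]
    have h2 : (if X n = X m then S n m else 0) = (if X m = X n then S n m else 0) := by
      simp [eq_comm]
    rw [this, h2]
    ring
  -- sum over all players
  have hsplit : ∀ (Z : Fin N → Fin 2),
      (∑ m, cong S Z m) = (∑ m ∈ univ.erase n, cong S Z m) + cong S Z n := by
    intro Z
    rw [Finset.sum_erase_add _ _ (Finset.mem_univ n)]
  rw [hsplit Y, hsplit X]
  have herase : (∑ m ∈ univ.erase n, cong S Y m) - ∑ m ∈ univ.erase n, cong S X m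
      = cong S Y n - cong S X n := by
    rw [← Finset.sum_sub_distrib]
    have h1 : ∑ m ∈ univ.erase n, (cong S Y m - cong S X m)
        = ∑ m ∈ univ.erase n,
            ((if X m = r then S n m else 0) - (if X m = X n then S n m else 0)) := by
      apply Finset.sum_congr rfl
      intro m hm
      exact hdiff m (Finset.ne_of_mem_erase hm)
    rw [h1]
    have h2 : ∑ m ∈ univ.erase n,
          ((if X m = r then S n m else 0) - (if X m = X n then S n m else 0))
        = ∑ m, ((if X m = r then S n m else 0) - (if X m = X n then S n m else 0)) := by
      rw [← Finset.sum_erase_add _ _ (Finset.mem_univ n)]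
      have : (if X n = r then S n n else 0) - (if X n = X n then S n n else 0) = 0 := by
        simp [hSdiag n]
      rw [this, add_zero]
    rw [h2, Finset.sum_sub_distrib]
    have hY1 : cong S Y n = ∑ m, if X m = r then S n m else 0 := by
      rw [cong_eq_sum_ite, hYn]
      apply Finset.sum_congr rfl
      intro m _
      by_cases hm : m = n
      · subst hm; simp [hYn, hSdiag m]
      · rw [hY, Function.update_of_ne hm, hSsymm m n]
    have hX1 : cong S X n = ∑ m, if X m = X n then S n m else 0 := by
      rw [cong_eq_sum_ite]
      apply Finset.sum_congr rfl
      intro m _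
      rw [hSsymm m n]
    rw [hY1, hX1]
  linarith [herase]

/-- The potential strictly decreases along a better response. -/
lemma pot_dec {N : ℕ} (S : Fin N → Fin N → ℝ)
    (hSnonneg : ∀ m n, 0 ≤ S m n) (hSdiag : ∀ n, S n n = 0)
    (hSsymm : ∀ m n, S m n = S n m)
    (f : Fin N → Fin 2 → ℝ → ℝ) (s : Fin N → ℝ)
    (hs : ∀ n x, 0 ≤ x → x ≤ ∑ m, S m n →
      (0 < f n 1 ((∑ m, S m n) - x) - f n 0 x → s n < x) ∧
      (f n 1 ((∑ m, S m n) - x) - f n 0 x < 0 → x < s n))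
    (X Y : Fin N → Fin 2) (h : BetterResponse S f X Y) :
    pot S s Y < pot S s X := by
  classical
  obtain ⟨n, r, hr, hYe, himp⟩ := h
  subst hYe
  set Y := Function.update X n r with hY
  set C : ℝ := ∑ m, S m n with hC
  have hself : cong S Y n = C - cong S X n := cong_update_self S hSdiag X n r hr
  have hquad : (∑ m, cong S Y m) - ∑ m, cong S X m
      = 2 * (cong S Y n - cong S X n) := sum_cong_update S hSdiag hSsymm X n r hr
  -- linear part changes only at n
  have hlinsplit : ∀ (Z : Fin N → Fin 2),
      (∑ m, (if Z m = 1 then 2 * ((∑ m', S m' m) - 2 * s m) else 0))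
        = (∑ m ∈ univ.erase n, (if Z m = 1 then 2 * ((∑ m', S m' m) - 2 * s m) else 0))
          + (if Z n = 1 then 2 * ((∑ m', S m' n) - 2 * s n) else 0) := by
    intro Z
    rw [Finset.sum_erase_add _ _ (Finset.mem_univ n)]
  have hlinerase : (∑ m ∈ univ.erase n, (if Y m = 1 then 2 * ((∑ m', S m' m) - 2 * s m) else 0))
      = ∑ m ∈ univ.erase n, (if X m = 1 then 2 * ((∑ m', S m' m) - 2 * s m) else 0) := by
    apply Finset.sum_congr rfl
    intro m hm
    rw [hY, Function.update_of_ne (Finset.ne_of_mem_erase hm)]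
  have hYn : Y n = r := Function.update_self n r X
  have hcXnn : 0 ≤ cong S X n := cong_nonneg S hSnonneg X n
  have hcXnl : cong S X n ≤ C := cong_le S hSnonneg X n
  -- case analysis on the direction of the switch
  have hcase : (X n = 0 ∧ r = 1) ∨ (X n = 1 ∧ r = 0) := by
    revert hr
    exact (by decide : ∀ r w : Fin 2, r ≠ w → (w = 0 ∧ r = 1) ∨ (w = 1 ∧ r = 0)) r (X n)
  unfold pot
  rw [hlinsplit Y, hlinsplit X, hYn]
  rcases hcase with ⟨hXn0, hr1⟩ | ⟨hXn1, hr0⟩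
  · -- switching 0 → 1 : improvement means g (cong X n) > 0, so s n < cong X n
    have himp' : f n 1 (C - cong S X n) > f n 0 (cong S X n) := by
      rw [hr1, hXn0] at himp
      rw [← hself]
      exact himp
    have hsx : s n < cong S X n := (hs n (cong S X n) hcXnn hcXnl).1 (by linarith)
    rw [hr1, hXn0]
    simp only [reduceIte, show ¬ ((0:Fin 2) = 1) by decide]
    rw [hlinerase]
    have : (∑ m, cong S Y m) - ∑ m, cong S X m = 2 * (C - 2 * cong S X n) := by
      rw [hquad, hself]; ring
    rw [← hC]
    linarith [this]
  · -- switching 1 → 0 : improvement means g (C - cong X n) < 0, so C - cong X n < s n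
    have himp' : f n 0 (C - cong S X n) > f n 1 (cong S X n) := by
      rw [hr0, hXn1] at himp
      rw [← hself]
      exact himp
    have key : f n 1 (C - (C - cong S X n)) - f n 0 (C - cong S X n) < 0 := by
      have : C - (C - cong S X n) = cong S X n := by ring
      rw [this]
      linarith
    have hsx : C - cong S X n < s n :=
      (hs n (C - cong S X n) (by linarith) (by linarith)).2 key
    rw [hr0, hXn1]
    simp only [reduceIte, show ¬ ((0:Fin 2) = 1) by decide]
    rw [hlinerase]
    have : (∑ m, cong S Y m) - ∑ m, cong S X m = 2 * (C - 2 * cong S X n) := by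
      rw [hquad, hself]; ring
    rw [← hC]
    linarith [this]

/-- Every GCGWE with two resources on an undirected graph (symmetric `S`) has
the finite improvement property: no state is revisited along a sequence of
better response updates, and there is no infinite sequence of better response
updates. -/
theorem stmt7 (N : ℕ)
    (S : Fin N → Fin N → ℝ)
    (hSnonneg : ∀ m n, 0 ≤ S m n) (hSdiag : ∀ n, S n n = 0)
    (hSsymm : ∀ m n, S m n = S n m)
    (f : Fin N → Fin 2 → ℝ → ℝ)
    (hf : ∀ n r, StrictAnti (f n r)) (hcont : ∀ n r, Continuous (f n r)) :
    (∀ (seq : ℕ → (Fin N → Fin 2)) (k : ℕ), 0 < k →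
        (∀ t < k, BetterResponse S f (seq t) (seq (t + 1))) →
        seq k ≠ seq 0) ∧
    ¬ ∃ seq : ℕ → (Fin N → Fin 2),
        ∀ t, BetterResponse S f (seq t) (seq (t + 1)) := by
  classical
  -- the "crossing" function
  set g : Fin N → ℝ → ℝ := fun n x => f n 1 ((∑ m, S m n) - x) - f n 0 x with hg
  have hgmono : ∀ n, StrictMono (g n) := by
    intro n a b hab
    have h1 : f n 1 ((∑ m, S m n) - a) < f n 1 ((∑ m, S m n) - b) :=
      hf n 1 (by linarith)
    have h2 : f n 0 b < f n 0 a := hf n 0 hab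
    show f n 1 ((∑ m, S m n) - a) - f n 0 a < f n 1 ((∑ m, S m n) - b) - f n 0 b
    linarith
  have hgcont : ∀ n, Continuous (g n) := by
    intro n
    exact ((hcont n 1).comp (continuous_const.sub continuous_id)).sub (hcont n 0)
  -- thresholds
  have hsep : ∀ n, ∃ sn : ℝ, ∀ x, 0 ≤ x → x ≤ ∑ m, S m n →
      (0 < g n x → sn < x) ∧ (g n x < 0 → x < sn) := by
    intro n
    by_cases h1 : ∃ x, 0 ≤ x ∧ x ≤ ∑ m, S m n ∧ g n x < 0
    · by_cases h2 : ∃ y, 0 ≤ y ∧ y ≤ ∑ m, S m n ∧ 0 < g n y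
      · obtain ⟨x, hx0, hxC, hxg⟩ := h1
        obtain ⟨y, hy0, hyC, hyg⟩ := h2
        have hxy : x ≤ y := le_of_lt ((hgmono n).lt_iff_lt.mp (hxg.trans hyg))
        have hmem : (0 : ℝ) ∈ Set.Icc (g n x) (g n y) := ⟨hxg.le, hyg.le⟩
        obtain ⟨s0, _, hgs0⟩ :=
          intermediate_value_Icc hxy ((hgcont n).continuousOn) hmem
        refine ⟨s0, fun z _ _ => ⟨fun hz => ?_, fun hz => ?_⟩⟩
        · exact (hgmono n).lt_iff_lt.mp (by rw [hgs0]; exact hz)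
        · exact (hgmono n).lt_iff_lt.mp (by rw [hgs0]; exact hz)
      · push_neg at h2
        refine ⟨(∑ m, S m n) + 1, fun x hx0 hxC => ⟨fun hgx => ?_, fun _ => by linarith⟩⟩
        exact absurd hgx (not_lt.mpr (h2 x hx0 hxC))
    · push_neg at h1
      refine ⟨-1, fun x hx0 hxC => ⟨fun _ => by linarith, fun hgx => ?_⟩⟩
      exact absurd hgx (not_lt.mpr (h1 x hx0 hxC))
  choose s hs using hsep
  have hdec : ∀ X Y, BetterResponse S f X Y → pot S s Y < pot S s X := by
    intro X Y h
    exact pot_dec S hSnonneg hSdiag hSsymm f s hs X Y h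
  constructor
  · intro seq k hk hchain
    have hmain : ∀ j, j ≤ k → 0 < j → pot S s (seq j) < pot S s (seq 0) := by
      intro j
      induction j with
      | zero => intro _ h0; exact absurd h0 (lt_irrefl 0)
      | succ j ih =>
        intro hjk _
        have hbr := hchain j (by omega)
        have hd := hdec _ _ hbr
        rcases Nat.eq_zero_or_pos j with hj0 | hjpos
        · rw [hj0] at hd ⊢; exact hd
        · exact hd.trans (ih (by omega) hjpos)
    intro he
    have := hmain k le_rfl hk
    rw [he] at this
    exact lt_irrefl _ this
  · rintro ⟨seq, hseq⟩
    have key : ∀ j i, i < j → pot S s (seq j) < pot S s (seq i) := by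
      intro j
      induction j with
      | zero => intro i hi; omega
      | succ j ih =>
        intro i hi
        have hd := hdec _ _ (hseq j)
        rcases Nat.lt_succ_iff_lt_or_eq.mp hi with h | h
        · exact hd.trans (ih i h)
        · rw [h]; exact hd
    obtain ⟨a, b, hab, heq⟩ := Finite.exists_ne_map_eq_of_infinite seq
    rcases lt_or_gt_of_ne hab with h | h
    · have := key b a h
      rw [heq] at this
      exact lt_irrefl _ this
    · have := key a b h
      rw [heq] at this
      exact lt_irrefl _ this
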